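/- Let G be a cactus with n ≥ 6 vertices and r ≥ 2 cycles in which every vertex has degree at least 2. Suppose u₀u₁ is an edge of G with d_G(u₀) = d_G(u₁) = 2, let u₂ be the neighbor of u₀ other than u₁ with d_G(u₂) = d ≥ 3, and suppose u₁u₂ is an edge of G. Let G' = G − u₀ − u₁. Let D be an orientation of G and let D' be an orientation of G' that orients every edge of G' in the same direction as D. Then for every real a ≥ 1, R⁰_{a+1}(D) − R⁰_{a+1}(D') ≤ (1/2)·[2^{a+1} + 2 + d^{a+1} − (d−2)^{a+1}], with equality if and only if d⁻_D(u₂) = d_G(u₂) or d⁺_D(u₂) = d_G(u₂). -/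

import Mathlib

/-- An orientation of a simple graph `G`: each edge `{u,v}` is replaced by exactly one
of the arcs `(u,v)` or `(v,u)`. -/
structure SimpleGraph.Orientation {V : Type*} (G : SimpleGraph V) where
  /-- the arc relation of the orientation -/
  arc : V → V → Prop
  adj_of_arc : ∀ u v, arc u v → G.Adj u v
  arc_total : ∀ u v, G.Adj u v → arc u v ∨ arc v u
  arc_asymm : ∀ u v, arc u v → ¬ arc v u

namespace SimpleGraph.Orientation

variable {V : Type*} {G : SimpleGraph V} (D : G.Orientation)

/-- The out-degree of a vertex in the orientation. -/
noncomputable def outDeg (u : V) : ℕ := Set.ncard {v | D.arc u v}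

/-- The in-degree of a vertex in the orientation. -/
noncomputable def inDeg (v : V) : ℕ := Set.ncard {u | D.arc u v}

/-- An orientation is sink-source if every vertex has out-degree 0 or in-degree 0. -/
def IsSinkSource : Prop := ∀ v : V, D.outDeg v = 0 ∨ D.inDeg v = 0

open scoped Classical in
/-- The zeroth-order general Randić index `R⁰_{a+1}(D)` of an orientation:
`(1/2) ∑_{(u,v) arc} ((d⁺ u)^a + (d⁻ v)^a)`. -/
noncomputable def randic [Fintype V] (a : ℝ) : ℝ :=
  (1 / 2) * ∑ p ∈ Finset.univ.filter (fun p : V × V => D.arc p.1 p.2),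
    ((D.outDeg p.1 : ℝ) ^ a + (D.inDeg p.2 : ℝ) ^ a)

end SimpleGraph.Orientation

/-- A cactus: a connected simple graph in which any two distinct cycles share at most
one vertex (cycles are identified with their edge sets). -/
def SimpleGraph.IsCactus {V : Type*} [DecidableEq V] (G : SimpleGraph V) : Prop :=
  G.Connected ∧ ∀ (u v : V) (c : G.Walk u u) (c' : G.Walk v v),
    c.IsCycle → c'.IsCycle → c.edges.toFinset ≠ c'.edges.toFinset →
      (c.support.toFinset ∩ c'.support.toFinset).card ≤ 1

/-!
Put `p = a + 1` and `ψ_c(x) = (x + c)^p - x^p`. Counting each arc at its tail and at its head,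
`2 R⁰_{a+1}(D) = ∑_v (d⁺(v)^p + d⁻(v)^p)`, so `2 (R⁰_{a+1}(D) - R⁰_{a+1}(D'))` only involves `u₀`,
`u₁` and the change at `u₂`, whose degrees `s = d⁺_{D'}(u₂)`, `t = d⁻_{D'}(u₂)` add up to `d - 2`.
Reversing every arc changes neither index, so either both triangle edges at `u₂` point into `u₂`,
and the difference is `2^p + 2 + ψ_2(t)`, or they point in opposite directions, and it is at most
`2^(p+1) + ψ_1(s) + ψ_1(t)`. Convexity of `x^p` makes `ψ_c` increasing, which bounds the first case
by `2^p + 2 + ψ_2(d - 2)`, with equality iff `s = 0`. For `p ≥ 2` the function `ψ_1` is convex too,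
so `ψ_1(s) + ψ_1(t) ≤ ψ_1(0) + ψ_1(d - 2)`, and `ψ_1(1) < ψ_1(d - 1)` makes the second case smaller.
-/

section

open Set

theorem ConvexOn.map_add_sub_le_map_add_sub {s : Set ℝ} {f : ℝ → ℝ} (hf : ConvexOn ℝ s f)
    {x y c : ℝ} (hx : x ∈ s) (hyc : y + c ∈ s) (hxy : x ≤ y) (hc : 0 ≤ c) :
    f (x + c) - f x ≤ f (y + c) - f y := by
  rcases hc.eq_or_lt with rfl | hc
  · simp
  have hσ : 0 < y + c - x := by linarith
  set θ := c / (y + c - x)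
  have hθ₀ : 0 ≤ θ := by positivity
  have hθ₁ : θ ≤ 1 := (div_le_one hσ).2 (by linarith)
  -- `x + c` and `y` are the convex combinations of `x` and `y + c` with swapped weights
  have h₁ := hf.2 hx hyc (sub_nonneg.2 hθ₁) hθ₀ (sub_add_cancel 1 θ)
  have h₂ := hf.2 hx hyc hθ₀ (sub_nonneg.2 hθ₁) (add_sub_cancel θ 1)
  have e₁ : (1 - θ) • x + θ • (y + c) = x + c := by
    simp only [smul_eq_mul, θ]; field_simp; ring
  have e₂ : θ • x + (1 - θ) • (y + c) = y := by
    simp only [smul_eq_mul, θ]; field_simp; ring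
  rw [e₁] at h₁
  rw [e₂] at h₂
  simp only [smul_eq_mul] at h₁ h₂
  linarith

theorem StrictConvexOn.map_add_sub_lt_map_add_sub {s : Set ℝ} {f : ℝ → ℝ}
    (hf : StrictConvexOn ℝ s f) {x y c : ℝ} (hx : x ∈ s) (hyc : y + c ∈ s) (hxy : x < y)
    (hc : 0 < c) : f (x + c) - f x < f (y + c) - f y := by
  have hσ : 0 < y + c - x := by linarith
  set θ := c / (y + c - x)
  have hθ₀ : 0 < θ := by positivity
  have hθ₁ : θ < 1 := (div_lt_one hσ).2 (by linarith)
  have h₁ := hf.2 hx hyc (by linarith) (sub_pos.2 hθ₁) hθ₀ (sub_add_cancel 1 θ)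
  have h₂ := hf.convexOn.2 hx hyc hθ₀.le (sub_nonneg.2 hθ₁.le) (add_sub_cancel θ 1)
  have e₁ : (1 - θ) • x + θ • (y + c) = x + c := by
    simp only [smul_eq_mul, θ]; field_simp; ring
  have e₂ : θ • x + (1 - θ) • (y + c) = y := by
    simp only [smul_eq_mul, θ]; field_simp; ring
  rw [e₁] at h₁
  rw [e₂] at h₂
  simp only [smul_eq_mul] at h₁ h₂
  linarith

theorem convexOn_rpow_add_sub_rpow {p c : ℝ} (hp : 2 ≤ p) (hc : 0 ≤ c) :
    ConvexOn ℝ (Ici 0) (fun x : ℝ => (x + c) ^ p - x ^ p) := by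
  have hderiv (x : ℝ) : HasDerivAt (fun x : ℝ => (x + c) ^ p - x ^ p)
      (p * (x + c) ^ (p - 1) - p * x ^ (p - 1)) x := by
    have hp₁ : 1 ≤ p := by linarith
    exact (Real.hasDerivAt_rpow_const (Or.inr hp₁)).comp_add_const x c |>.sub
      (Real.hasDerivAt_rpow_const (Or.inr hp₁))
  refine MonotoneOn.convexOn_of_deriv (convex_Ici 0)
    (fun x _ => (hderiv x).continuousAt.continuousWithinAt)
    (fun x _ => (hderiv x).differentiableAt.differentiableWithinAt) ?_
  intro x hx y hy hxy
  rw [interior_Ici] at hx hy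
  rw [(hderiv x).deriv, (hderiv y).deriv, ← mul_sub, ← mul_sub]
  have := (convexOn_rpow (p := p - 1) (by linarith)).map_add_sub_le_map_add_sub
    (mem_Ici.2 (le_of_lt hx)) (mem_Ici.2 (by linarith [mem_Ioi.1 hy])) hxy hc
  exact mul_le_mul_of_nonneg_left this (by linarith)

theorem rpow_add_one_sub_rpow_add_lt {p s t : ℝ} (hp : 2 ≤ p) (hs : 0 ≤ s) (ht : 0 ≤ t)
    (hst : 1 ≤ s + t) :
    2 ^ (p + 1) + ((s + 1) ^ p - s ^ p + ((t + 1) ^ p - t ^ p)) <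
      2 ^ p + 2 + ((s + t + 2) ^ p - (s + t) ^ p) := by
  have hp₀ : p ≠ 0 := by positivity
  have h₁ := (convexOn_rpow_add_sub_rpow hp zero_le_one).map_add_sub_le_map_add_sub
    (x := 0) (y := t) (c := s) self_mem_Ici (by simp only [mem_Ici]; positivity) ht hs
  have h₂ := (strictConvexOn_rpow (by linarith : 1 < p)).map_add_sub_lt_map_add_sub
    (x := 1) (y := s + t + 1) (c := 1) (mem_Ici.2 zero_le_one) (by simp only [mem_Ici]; positivity)
    (by linarith) one_pos
  have h₃ : (2 : ℝ) ^ (p + 1) = 2 * 2 ^ p := by rw [Real.rpow_add_one two_ne_zero, mul_comm]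
  simp only [zero_add, Real.zero_rpow hp₀, Real.one_rpow, add_comm t s] at h₁
  rw [one_add_one_eq_two, show s + t + 1 + 1 = s + t + 2 by ring, Real.one_rpow] at h₂
  linarith

end

theorem le_and_eq_iff_of_imp {x y : ℝ} {P : Prop} (heq : P → x = y) (hlt : ¬ P → x < y) :
    x ≤ y ∧ (x = y ↔ P) := by
  by_cases hP : P
  · exact ⟨(heq hP).le, fun _ => hP, heq⟩
  · exact ⟨(hlt hP).le, fun h => absurd h (hlt hP).ne, fun h => absurd h hP⟩

theorem SimpleGraph.adj_iff_of_neighborSet_eq_pair {V : Type*} {G : SimpleGraph V} {u x y : V}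
    (h : G.neighborSet u = {x, y}) (w : V) : G.Adj u w ↔ w = x ∨ w = y := by
  rw [← mem_neighborSet, h]
  rfl

namespace SimpleGraph.Orientation

open Finset

variable {V : Type*} {G G' : SimpleGraph V} (D : G.Orientation) (D' : G'.Orientation)

def reverse : G.Orientation where
  arc u v := D.arc v u
  adj_of_arc u v h := (D.adj_of_arc v u h).symm
  arc_total u v h := D.arc_total v u h.symm
  arc_asymm u v h := D.arc_asymm v u h

@[simp] theorem outDeg_reverse (v : V) : D.reverse.outDeg v = D.inDeg v := rfl

@[simp] theorem inDeg_reverse (v : V) : D.reverse.inDeg v = D.outDeg v := rfl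

@[simp] theorem randic_reverse [Fintype V] (a : ℝ) : D.reverse.randic a = D.randic a := by
  rw [randic, randic]
  congr 1
  refine sum_nbij' Prod.swap Prod.swap ?_ ?_ (by simp) (by simp) fun _ _ => add_comm _ _ <;>
    intro e he <;> simp only [mem_filter, mem_univ, true_and] at he ⊢ <;> exact he

theorem arc_iff_not_arc {u v : V} (h : G.Adj u v) : D.arc v u ↔ ¬ D.arc u v :=
  ⟨D.arc_asymm v u, (D.arc_total u v h).resolve_left⟩

theorem outDeg_add_inDeg [Finite V] (v : V) :
    D.outDeg v + D.inDeg v = (G.neighborSet v).ncard := by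
  have hdisj : Disjoint {w | D.arc v w} {w | D.arc w v} :=
    Set.disjoint_left.2 fun w h₁ h₂ => D.arc_asymm v w h₁ h₂
  have hunion : {w | D.arc v w} ∪ {w | D.arc w v} = G.neighborSet v := by
    ext w
    exact ⟨fun h => h.elim (D.adj_of_arc v w) fun h => (D.adj_of_arc w v h).symm,
      D.arc_total v w⟩
  rw [outDeg, inDeg, ← Set.ncard_union_eq hdisj, hunion]

theorem outDeg_eq_zero_of_forall_not_adj {v : V} (h : ∀ w, ¬ G.Adj v w) : D.outDeg v = 0 := by
  simp [outDeg, fun w => mt (D.adj_of_arc v w) (h w)]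

theorem inDeg_eq_zero_of_forall_not_adj {v : V} (h : ∀ w, ¬ G.Adj v w) : D.inDeg v = 0 :=
  D.reverse.outDeg_eq_zero_of_forall_not_adj h

noncomputable def degPow (p : ℝ) (v : V) : ℝ := (D.outDeg v : ℝ) ^ p + (D.inDeg v : ℝ) ^ p

theorem degPow_le_rpow [Finite V] {p : ℝ} (hp : 1 ≤ p) (v : V) :
    D.degPow p v ≤ ((G.neighborSet v).ncard : ℝ) ^ p := by
  rw [degPow, ← D.outDeg_add_inDeg, Nat.cast_add]
  exact Real.add_rpow_le_rpow_add (Nat.cast_nonneg _) (Nat.cast_nonneg _) hp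

theorem degPow_add_degPow_le [Finite V] {u₀ u₁ u₂ : V} (hN₀ : G.neighborSet u₀ = {u₁, u₂})
    (hN₁ : G.neighborSet u₁ = {u₀, u₂}) {p : ℝ} (hp : 1 ≤ p) :
    D.degPow p u₀ + D.degPow p u₁ ≤ 2 ^ (p + 1) := by
  have h₀ := D.degPow_le_rpow hp u₀
  have h₁ := D.degPow_le_rpow hp u₁
  rw [hN₀, Set.ncard_pair ((adj_iff_of_neighborSet_eq_pair hN₁ u₂).2 (Or.inr rfl)).ne] at h₀
  rw [hN₁, Set.ncard_pair ((adj_iff_of_neighborSet_eq_pair hN₀ u₂).2 (Or.inr rfl)).ne] at h₁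
  rw [Real.rpow_add_one two_ne_zero]
  push_cast at h₀ h₁
  linarith

open scoped Classical in
theorem sum_arcs_fst [Fintype V] (f : V → ℝ) :
    ∑ e ∈ univ.filter (fun e : V × V => D.arc e.1 e.2), f e.1 = ∑ u, D.outDeg u * f u := by
  rw [sum_filter, Fintype.sum_prod_type]
  refine sum_congr rfl fun u _ => ?_
  dsimp only
  rw [← sum_filter, sum_const, nsmul_eq_mul, outDeg, ← Set.ncard_coe_finset]
  simp

open scoped Classical in
theorem sum_arcs_snd [Fintype V] (f : V → ℝ) :
    ∑ e ∈ univ.filter (fun e : V × V => D.arc e.1 e.2), f e.2 = ∑ v, D.inDeg v * f v := by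
  rw [sum_filter, Fintype.sum_prod_type, sum_comm]
  refine sum_congr rfl fun v _ => ?_
  dsimp only
  rw [← sum_filter, sum_const, nsmul_eq_mul, inDeg, ← Set.ncard_coe_finset]
  simp

theorem randic_eq_sum_degPow [Fintype V] {a : ℝ} (ha : a + 1 ≠ 0) :
    D.randic a = 1 / 2 * ∑ v, D.degPow (a + 1) v := by
  have hpow (n : ℕ) : (n : ℝ) * (n : ℝ) ^ a = (n : ℝ) ^ (a + 1) := by
    rw [Real.rpow_add_one' n.cast_nonneg ha, mul_comm]
  rw [randic, sum_add_distrib, sum_arcs_fst D (fun u => (D.outDeg u : ℝ) ^ a),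
    sum_arcs_snd D (fun v => (D.inDeg v : ℝ) ^ a)]
  simp only [degPow, sum_add_distrib, hpow]

variable {D D'}

theorem arc_iff_arc_and_adj (hDD' : ∀ x y, D'.arc x y → D.arc x y) {x y : V} :
    D'.arc x y ↔ D.arc x y ∧ G'.Adj x y :=
  ⟨fun h => ⟨hDD' x y h, D'.adj_of_arc x y h⟩, fun ⟨h, hadj⟩ =>
    (D'.arc_total x y hadj).resolve_right fun h' => D.arc_asymm x y h (hDD' y x h')⟩

open scoped Classical in
theorem outDeg_eq_outDeg_add_card [Finite V] (hDD' : ∀ x y, D'.arc x y → D.arc x y) {v : V}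
    (A : Finset V) (hA : ∀ w, G.Adj v w → (w ∈ A ↔ ¬ G'.Adj v w)) :
    D.outDeg v = D'.outDeg v + #{w ∈ A | D.arc v w} := by
  have hsplit : {w | D.arc v w} = {w | D'.arc v w} ∪ ↑{w ∈ A | D.arc v w} := by
    ext w
    simp only [Set.mem_ofPred, Set.mem_union, coe_filter, arc_iff_arc_and_adj hDD']
    have := hA w
    have := D.adj_of_arc v w
    tauto
  have hdisj : Disjoint {w | D'.arc v w} (↑{w ∈ A | D.arc v w} : Set V) := by
    refine Set.disjoint_left.2 fun w h hw => ?_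
    rw [coe_filter] at hw
    exact (hA w (D.adj_of_arc v w hw.2)).1 hw.1 (D'.adj_of_arc v w h)
  rw [outDeg, hsplit, Set.ncard_union_eq hdisj (Set.toFinite _), Set.ncard_coe_finset, outDeg]

open scoped Classical in
theorem inDeg_eq_inDeg_add_card [Finite V] (hDD' : ∀ x y, D'.arc x y → D.arc x y) {v : V}
    (A : Finset V) (hA : ∀ w, G.Adj v w → (w ∈ A ↔ ¬ G'.Adj v w)) :
    D.inDeg v = D'.inDeg v + #{w ∈ A | D.arc w v} :=
  outDeg_eq_outDeg_add_card (D := D.reverse) (D' := D'.reverse) (fun x y h => hDD' y x h) A hA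

variable [Fintype V] {u₀ u₁ u₂ : V}

theorem two_mul_randic_sub_randic (hDD' : ∀ x y, D'.arc x y → D.arc x y)
    (hG' : ∀ x y, G'.Adj x y ↔ (G.Adj x y ∧ x ≠ u₀ ∧ x ≠ u₁ ∧ y ≠ u₀ ∧ y ≠ u₁))
    (hN₀ : G.neighborSet u₀ = {u₁, u₂}) (hN₁ : G.neighborSet u₁ = {u₀, u₂}) {a : ℝ}
    (ha : a + 1 ≠ 0) :
    2 * (D.randic a - D'.randic a) =
      D.degPow (a + 1) u₀ + D.degPow (a + 1) u₁ + (D.degPow (a + 1) u₂ - D'.degPow (a + 1) u₂) := by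
  classical
  have hadj₀ := adj_iff_of_neighborSet_eq_pair hN₀
  have hadj₁ := adj_iff_of_neighborSet_eq_pair hN₁
  have hzero (x : V) (hx : x = u₀ ∨ x = u₁) : D'.degPow (a + 1) x = 0 := by
    have h (w : V) : ¬ G'.Adj x w := by rw [hG']; rcases hx with rfl | rfl <;> tauto
    simp [degPow, D'.outDeg_eq_zero_of_forall_not_adj h, D'.inDeg_eq_zero_of_forall_not_adj h,
      Real.zero_rpow ha]
  have hsame (v : V) (hv : v ∉ ({u₀, u₁, u₂} : Finset V)) :
      D.degPow (a + 1) v - D'.degPow (a + 1) v = 0 := by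
    simp only [Finset.mem_insert, Finset.mem_singleton, not_or] at hv
    have hA (w : V) (hw : G.Adj v w) : w ∈ (∅ : Finset V) ↔ ¬ G'.Adj v w := by
      have h₀ : w ≠ u₀ := by rintro rfl; have := (hadj₀ v).1 hw.symm; tauto
      have h₁ : w ≠ u₁ := by rintro rfl; have := (hadj₁ v).1 hw.symm; tauto
      simp [hG', hw, hv.1, hv.2.1, h₀, h₁]
    rw [degPow, degPow, outDeg_eq_outDeg_add_card hDD' ∅ hA, inDeg_eq_inDeg_add_card hDD' ∅ hA]
    simp
  have h01 : u₀ ≠ u₁ := ((hadj₀ u₁).2 (Or.inl rfl)).ne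
  have h02 : u₀ ≠ u₂ := ((hadj₀ u₂).2 (Or.inr rfl)).ne
  have h12 : u₁ ≠ u₂ := ((hadj₁ u₂).2 (Or.inr rfl)).ne
  rw [randic_eq_sum_degPow D ha, randic_eq_sum_degPow D' ha, ← mul_sub, ← sum_sub_distrib,
    ← sum_subset (subset_univ {u₀, u₁, u₂}) fun v _ hv => hsame v hv,
    sum_insert (by simp [h01, h02]), sum_insert (by simp [h12]), sum_singleton,
    hzero u₀ (Or.inl rfl), hzero u₁ (Or.inr rfl)]
  ring

theorem triangle_cases (hDD' : ∀ x y, D'.arc x y → D.arc x y)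
    (hG' : ∀ x y, G'.Adj x y ↔ (G.Adj x y ∧ x ≠ u₀ ∧ x ≠ u₁ ∧ y ≠ u₀ ∧ y ≠ u₁))
    (hN₀ : G.neighborSet u₀ = {u₁, u₂}) (hN₁ : G.neighborSet u₁ = {u₀, u₂}) {p : ℝ} (hp : p ≠ 0) :
    (D.outDeg u₂ = D'.outDeg u₂ ∧ D.inDeg u₂ = D'.inDeg u₂ + 2 ∧
      D.degPow p u₀ + D.degPow p u₁ = 2 ^ p + 2) ∨
    (D.outDeg u₂ = D'.outDeg u₂ + 2 ∧ D.inDeg u₂ = D'.inDeg u₂ ∧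
      D.degPow p u₀ + D.degPow p u₁ = 2 ^ p + 2) ∨
    (D.outDeg u₂ = D'.outDeg u₂ + 1 ∧ D.inDeg u₂ = D'.inDeg u₂ + 1) := by
  classical
  have hadj₀ := adj_iff_of_neighborSet_eq_pair hN₀
  have hadj₁ := adj_iff_of_neighborSet_eq_pair hN₁
  have h01 : G.Adj u₀ u₁ := (hadj₀ u₁).2 (Or.inl rfl)
  have h02 : G.Adj u₀ u₂ := (hadj₀ u₂).2 (Or.inr rfl)
  have h12 : G.Adj u₁ u₂ := (hadj₁ u₂).2 (Or.inr rfl)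
  have hnot (x : V) (hx : x = u₀ ∨ x = u₁) (w : V) : ¬ G'.Adj x w := by
    rw [hG']; rcases hx with rfl | rfl <;> tauto
  have hA₀ (w : V) (hw : G.Adj u₀ w) : w ∈ ({u₁, u₂} : Finset V) ↔ ¬ G'.Adj u₀ w := by
    simpa [hnot u₀ (Or.inl rfl)] using (hadj₀ w).1 hw
  have hA₁ (w : V) (hw : G.Adj u₁ w) : w ∈ ({u₀, u₂} : Finset V) ↔ ¬ G'.Adj u₁ w := by
    simpa [hnot u₁ (Or.inr rfl)] using (hadj₁ w).1 hw
  have hA₂ (w : V) (hw : G.Adj u₂ w) : w ∈ ({u₀, u₁} : Finset V) ↔ ¬ G'.Adj u₂ w := by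
    simp only [hG', hw, h02.ne', h12.ne', mem_insert, mem_singleton, ne_eq, not_false_eq_true,
      true_and, not_and, Decidable.not_not]
    tauto
  have ho₀ := outDeg_eq_outDeg_add_card hDD' _ hA₀
  have hi₀ := inDeg_eq_inDeg_add_card hDD' _ hA₀
  have ho₁ := outDeg_eq_outDeg_add_card hDD' _ hA₁
  have hi₁ := inDeg_eq_inDeg_add_card hDD' _ hA₁
  have ho₂ := outDeg_eq_outDeg_add_card hDD' _ hA₂
  have hi₂ := inDeg_eq_inDeg_add_card hDD' _ hA₂
  simp only [D'.outDeg_eq_zero_of_forall_not_adj (hnot _ (Or.inl rfl)),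
    D'.outDeg_eq_zero_of_forall_not_adj (hnot _ (Or.inr rfl)),
    D'.inDeg_eq_zero_of_forall_not_adj (hnot _ (Or.inl rfl)),
    D'.inDeg_eq_zero_of_forall_not_adj (hnot _ (Or.inr rfl)), zero_add] at ho₀ hi₀ ho₁ hi₁
  by_cases a01 : D.arc u₀ u₁ <;> by_cases a02 : D.arc u₀ u₂ <;> by_cases a12 : D.arc u₁ u₂ <;>
    simp [filter_insert, filter_singleton, h01.ne, h02.ne, h12.ne, D.arc_iff_not_arc h01,
      D.arc_iff_not_arc h02, D.arc_iff_not_arc h12, *] at ho₀ hi₀ ho₁ hi₁ ho₂ hi₂ <;>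
    simp [degPow, ho₀, hi₀, ho₁, hi₁, ho₂, hi₂, Real.zero_rpow hp] <;> ring

theorem two_mul_randic_sub_randic_le (hDD' : ∀ x y, D'.arc x y → D.arc x y)
    (hG' : ∀ x y, G'.Adj x y ↔ (G.Adj x y ∧ x ≠ u₀ ∧ x ≠ u₁ ∧ y ≠ u₀ ∧ y ≠ u₁))
    (hN₀ : G.neighborSet u₀ = {u₁, u₂}) (hN₁ : G.neighborSet u₁ = {u₀, u₂}) {a : ℝ} (ha : 1 ≤ a)
    (hd : 3 ≤ (G.neighborSet u₂).ncard) :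
    let d : ℝ := (G.neighborSet u₂).ncard
    2 * (D.randic a - D'.randic a) ≤ 2 ^ (a + 1) + 2 + (d ^ (a + 1) - (d - 2) ^ (a + 1)) ∧
      (2 * (D.randic a - D'.randic a) = 2 ^ (a + 1) + 2 + (d ^ (a + 1) - (d - 2) ^ (a + 1)) ↔
        D.inDeg u₂ = (G.neighborSet u₂).ncard ∨ D.outDeg u₂ = (G.neighborSet u₂).ncard) := by
  wlog hout : ¬ (D.outDeg u₂ = D'.outDeg u₂ + 2 ∧ D.inDeg u₂ = D'.inDeg u₂) generalizing D D'
  · have h := this (D := D.reverse) (D' := D'.reverse) (fun x y h => hDD' y x h)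
      (by simp only [outDeg_reverse, inDeg_reverse]; omega)
    simpa [or_comm] using h
  intro d
  have hp : 1 < a + 1 := by linarith
  rw [two_mul_randic_sub_randic hDD' hG' hN₀ hN₁ (by linarith),
    show d = D.outDeg u₂ + D.inDeg u₂ by simp [d, ← D.outDeg_add_inDeg], ← D.outDeg_add_inDeg]
  rw [← D.outDeg_add_inDeg] at hd
  obtain ⟨hS, hT, hW⟩ | hcase | ⟨hS, hT⟩ :=
    triangle_cases (p := a + 1) hDD' hG' hN₀ hN₁ (by linarith)
  · rw [hW]
    simp only [degPow, hS, hT] at hd ⊢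
    generalize D'.outDeg u₂ = s, D'.inDeg u₂ = t at *
    push_cast
    apply le_and_eq_iff_of_imp
    · intro h
      obtain rfl : s = 0 := by omega
      simp
    · intro h
      have := (strictConvexOn_rpow hp).map_add_sub_lt_map_add_sub (x := t) (y := s + t) (c := 2)
        (Set.mem_Ici.2 t.cast_nonneg) (Set.mem_Ici.2 (by positivity))
        (by simp [Nat.pos_of_ne_zero (show s ≠ 0 by omega)]) two_pos
      rw [show (s : ℝ) + (t + 2) = s + t + 2 by ring, show (s : ℝ) + t + 2 - 2 = s + t by ring]
      linarith
  · exact absurd ⟨hcase.1, hcase.2.1⟩ hout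
  · have hW := D.degPow_add_degPow_le hN₀ hN₁ hp.le
    simp only [degPow, hS, hT] at hd hW ⊢
    generalize D'.outDeg u₂ = s, D'.inDeg u₂ = t at *
    push_cast
    apply le_and_eq_iff_of_imp
    · intro h
      omega
    · intro _
      have := rpow_add_one_sub_rpow_add_lt (p := a + 1) (s := s) (t := t) (by linarith)
        s.cast_nonneg t.cast_nonneg (by exact_mod_cast (by omega : 1 ≤ s + t))
      rw [show (s : ℝ) + 1 + (t + 1) = s + t + 2 by ring, show (s : ℝ) + t + 2 - 2 = s + t by ring]
      linarith

end SimpleGraph.Orientation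

theorem randic_sub_le_of_delete_two_vertices_general
    {V : Type*} [Fintype V] (G G' : SimpleGraph V) (d : ℕ)
    (u₀ u₁ u₂ : V) (h01 : G.Adj u₀ u₁)
    (hd1 : (G.neighborSet u₁).ncard = 2)
    (hN : G.neighborSet u₀ = {u₁, u₂})
    (hd2 : (G.neighborSet u₂).ncard = d) (hd3 : 3 ≤ d)
    (h12 : G.Adj u₁ u₂)
    (hG' : ∀ x y, G'.Adj x y ↔
      (G.Adj x y ∧ x ≠ u₀ ∧ x ≠ u₁ ∧ y ≠ u₀ ∧ y ≠ u₁))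
    (D : G.Orientation) (D' : G'.Orientation)
    (hDD' : ∀ x y, D'.arc x y → D.arc x y)
    (a : ℝ) (ha : 1 ≤ a) :
    D.randic a - D'.randic a ≤
      (1 / 2) * ((2 : ℝ) ^ (a + 1) + 2 + (d : ℝ) ^ (a + 1) - ((d : ℝ) - 2) ^ (a + 1)) ∧
    (D.randic a - D'.randic a =
      (1 / 2) * ((2 : ℝ) ^ (a + 1) + 2 + (d : ℝ) ^ (a + 1) - ((d : ℝ) - 2) ^ (a + 1)) ↔
      D.inDeg u₂ = (G.neighborSet u₂).ncard ∨ D.outDeg u₂ = (G.neighborSet u₂).ncard) := by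
  have h02 : G.Adj u₀ u₂ := (SimpleGraph.adj_iff_of_neighborSet_eq_pair hN u₂).2 (Or.inr rfl)
  have hN₁ : G.neighborSet u₁ = {u₀, u₂} :=
    (Set.eq_of_subset_of_ncard_le (t := G.neighborSet u₁) (Set.pair_subset h01.symm h12)
      (by rw [hd1, Set.ncard_pair h02.ne]) (Set.toFinite _)).symm
  obtain ⟨hle, heq⟩ :=
    SimpleGraph.Orientation.two_mul_randic_sub_randic_le hDD' hG' hN hN₁ ha (hd2 ▸ hd3)
  rw [← hd2]
  refine ⟨by linarith, ?_⟩
  rw [← heq]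
  constructor <;> intro h <;> linarith

theorem randic_sub_le_of_delete_two_vertices
    {V : Type*} [Fintype V] [DecidableEq V] (G G' : SimpleGraph V) (n r d : ℕ)
    (hn : Fintype.card V = n) (hn6 : 6 ≤ n) (hr : 2 ≤ r)
    (hcac : G.IsCactus) (hcyc : G.edgeSet.ncard + 1 = n + r)
    (hδ : ∀ v : V, 2 ≤ (G.neighborSet v).ncard)
    (u₀ u₁ u₂ : V) (h01 : G.Adj u₀ u₁)
    (hd0 : (G.neighborSet u₀).ncard = 2) (hd1 : (G.neighborSet u₁).ncard = 2)
    (hN : G.neighborSet u₀ = {u₁, u₂})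
    (hd2 : (G.neighborSet u₂).ncard = d) (hd3 : 3 ≤ d)
    (h12 : G.Adj u₁ u₂)
    (hG' : ∀ x y, G'.Adj x y ↔
      (G.Adj x y ∧ x ≠ u₀ ∧ x ≠ u₁ ∧ y ≠ u₀ ∧ y ≠ u₁))
    (D : G.Orientation) (D' : G'.Orientation)
    (hDD' : ∀ x y, D'.arc x y → D.arc x y)
    (a : ℝ) (ha : 1 ≤ a) :
    D.randic a - D'.randic a ≤
      (1 / 2) * ((2 : ℝ) ^ (a + 1) + 2 + (d : ℝ) ^ (a + 1) - ((d : ℝ) - 2) ^ (a + 1)) ∧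
    (D.randic a - D'.randic a =
      (1 / 2) * ((2 : ℝ) ^ (a + 1) + 2 + (d : ℝ) ^ (a + 1) - ((d : ℝ) - 2) ^ (a + 1)) ↔
      D.inDeg u₂ = (G.neighborSet u₂).ncard ∨ D.outDeg u₂ = (G.neighborSet u₂).ncard) :=
  randic_sub_le_of_delete_two_vertices_general G G' d u₀ u₁ u₂ h01 hd1 hN hd2 hd3 h12 hG' D D' hDD'
    a ha
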